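/- Let f = 1 + ∑_{m≥1} a(m) w^m be a formal power series with integer coefficients a(m), let n ≥ 1 be a natural number, and let g = ∑_{m≥0} b(m) w^m be the formal n-th root of f given by the binomial series, so b(m) ∈ ℤ[1/n]. If p is a prime dividing n and some coefficient b(m) is not p-integral (i.e., ord_p(b(m)) < 0), then limsup_{m→∞} (−ord_p(b(m))) = ∞; that is, the p-adic valuations of the coefficients b(m) are unbounded below. -/

import Mathlib

/-!
If every coefficient of `g` had valuation at least `-(k + 1)` with `k ≥ 0`, then `h = pᵏ⁺¹ g`
would be `p`-integral with `hⁿ = p⁽ᵏ⁺¹⁾ⁿ f ≡ 0 mod p`. As `𝔽_p⟦X⟧` is a domain, `h ≡ 0 mod p`,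
so the valuations are in fact at least `-k`. Descending to `k = 0`, bounded denominators force
`g` to be `p`-integral.
-/

open PowerSeries

namespace PowerSeries

theorem coeff_mem_of_forall_coeff_pow_mem {R : Type*} [CommRing R] {P : Ideal R} [P.IsPrime]
    {H : R⟦X⟧} {n : ℕ} (hn : n ≠ 0) (h : ∀ m, coeff m (H ^ n) ∈ P) (m : ℕ) :
    coeff m H ∈ P := by
  have hpow : map (Ideal.Quotient.mk P) H ^ n = 0 := by
    ext k
    simpa [← map_pow, Ideal.Quotient.eq_zero_iff_mem] using h k
  simpa [Ideal.Quotient.eq_zero_iff_mem] using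
    congrArg (coeff m) ((pow_eq_zero_iff hn).mp hpow)

end PowerSeries

namespace Padic

variable {p : ℕ} [Fact p.Prime]

theorem norm_ratCast_le_zpow_neg_iff {q : ℚ} (hq : q ≠ 0) (C : ℤ) :
    ‖(q : ℚ_[p])‖ ≤ (p : ℝ) ^ (-C) ↔ C ≤ padicValRat p q := by
  rw [norm_eq_zpow_neg_valuation (by exact_mod_cast hq), valuation_ratCast,
    zpow_le_zpow_iff_right₀ (by exact_mod_cast (Fact.out : p.Prime).one_lt), neg_le_neg_iff]

theorem norm_coeff_lt_one_of_norm_coeff_pow_lt_one {G : ℚ_[p]⟦X⟧} {n : ℕ} (hn : n ≠ 0)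
    (hG : ∀ m, ‖coeff m G‖ ≤ 1) (hGn : ∀ m, ‖coeff m (G ^ n)‖ < 1) (m : ℕ) :
    ‖coeff m G‖ < 1 := by
  set H : ℤ_[p]⟦X⟧ := PowerSeries.mk fun m => (⟨coeff m G, hG m⟩ : ℤ_[p])
  have hH : map PadicInt.Coe.ringHom H = G := by
    ext m
    exact congrArg Subtype.val (coeff_mk (R := ℤ_[p]) m _)
  have hnorm (K : ℤ_[p]⟦X⟧) (m : ℕ) :
      ‖coeff m K‖ = ‖coeff m (map PadicInt.Coe.ringHom K)‖ := by
    rw [coeff_map]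
    rfl
  have hHn (m : ℕ) : coeff m (H ^ n) ∈ IsLocalRing.maximalIdeal ℤ_[p] := by
    rw [IsLocalRing.mem_maximalIdeal, PadicInt.mem_nonunits, hnorm, map_pow, hH]
    exact hGn m
  simpa only [hnorm, hH] using
    PadicInt.mem_nonunits.mp (coeff_mem_of_forall_coeff_pow_mem hn hHn m)

theorem norm_coeff_le_zpow_of_le_zpow_succ {G : ℚ_[p]⟦X⟧} {n : ℕ} (hn : n ≠ 0)
    (hGn : ∀ m, ‖coeff m (G ^ n)‖ ≤ 1) {k : ℕ} (hk : ∀ m, ‖coeff m G‖ ≤ (p : ℝ) ^ (k + 1 : ℤ))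
    (m : ℕ) : ‖coeff m G‖ ≤ (p : ℝ) ^ (k : ℤ) := by
  have hp : (1 : ℝ) < p := by exact_mod_cast (Fact.out : p.Prime).one_lt
  set c : ℚ_[p] := (p : ℚ_[p]) ^ (k + 1)
  have hc : ‖c‖ = (p : ℝ) ^ (-(k + 1 : ℤ)) := by
    rw [norm_p_pow]
    norm_cast
  have hcG (m : ℕ) : ‖coeff m (c • G)‖ ≤ 1 := by
    rw [coeff_smul, smul_eq_mul, norm_mul, hc,
      ← zpow_neg_mul_zpow_self (k + 1 : ℤ) (by positivity)]
    gcongr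
    exact hk m
  have hcGn (m : ℕ) : ‖coeff m ((c • G) ^ n)‖ < 1 := by
    rw [smul_pow, coeff_smul, smul_eq_mul, norm_mul, norm_pow, hc]
    calc _ ≤ ((p : ℝ) ^ (-(k + 1 : ℤ))) ^ n * 1 := by gcongr; exact hGn m
      _ < 1 := by
        rw [mul_one]
        exact pow_lt_one₀ (by positivity) (zpow_lt_one_of_neg₀ hp (by omega)) hn
  have hlt := norm_coeff_lt_one_of_norm_coeff_pow_lt_one hn hcG hcGn m
  rw [coeff_smul, smul_eq_mul, norm_mul, hc, zpow_neg, inv_mul_lt_iff₀ (by positivity),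
    mul_one] at hlt
  exact (norm_le_pow_iff_norm_lt_pow_add_one _ _).2 hlt

theorem norm_coeff_le_one_of_le_zpow {G : ℚ_[p]⟦X⟧} {n : ℕ} (hn : n ≠ 0)
    (hGn : ∀ m, ‖coeff m (G ^ n)‖ ≤ 1) {k : ℕ} (hk : ∀ m, ‖coeff m G‖ ≤ (p : ℝ) ^ (k : ℤ))
    (m : ℕ) : ‖coeff m G‖ ≤ 1 := by
  induction k with
  | zero => simpa using hk m
  | succ k ih => exact ih (norm_coeff_le_zpow_of_le_zpow_succ hn hGn (by exact_mod_cast hk))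

theorem norm_coeff_le_one_of_bddAbove {G : ℚ_[p]⟦X⟧} {n : ℕ} (hn : n ≠ 0)
    (hGn : ∀ m, ‖coeff m (G ^ n)‖ ≤ 1) (hG : BddAbove (Set.range fun m => ‖coeff m G‖))
    (m : ℕ) : ‖coeff m G‖ ≤ 1 := by
  have hp : (1 : ℝ) < p := by exact_mod_cast (Fact.out : p.Prime).one_lt
  obtain ⟨C, hC⟩ := hG
  obtain ⟨k, hk⟩ := pow_unbounded_of_one_lt C hp
  exact norm_coeff_le_one_of_le_zpow hn hGn
    (fun m => by simpa using (hC ⟨m, rfl⟩).trans hk.le) m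

end Padic

theorem unbounded_denominators_of_nth_root_general (n : ℕ) (hn : 1 ≤ n) (p : ℕ) (hp : p.Prime)
    (a : ℕ → ℤ) (F G : PowerSeries ℚ)
    (hF : F = PowerSeries.mk fun m => if m = 0 then 1 else (a m : ℚ))
    (hroot : G ^ n = F)
    (b : ℕ → ℚ) (hb : ∀ m, b m = PowerSeries.coeff m G)
    (hbad : ∃ m, b m ≠ 0 ∧ padicValRat p (b m) < 0) :
    ∀ C : ℤ, ∀ N : ℕ, ∃ m, N ≤ m ∧ b m ≠ 0 ∧ padicValRat p (b m) < C := by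
  have : Fact p.Prime := ⟨hp⟩
  by_contra! hbdd
  obtain ⟨C, N, hC⟩ := hbdd
  set G' := map (Rat.castHom ℚ_[p]) G
  have hcoeff (m : ℕ) : coeff m G' = b m := by simp [G', hb]
  have hG'n (m : ℕ) : ‖coeff m (G' ^ n)‖ ≤ 1 := by
    rw [← map_pow, hroot, hF, coeff_map, coeff_mk]
    split_ifs <;> simp [Padic.norm_int_le_one]
  have hG'bdd : BddAbove (Set.range fun m => ‖coeff m G'‖) := by
    refine Filter.IsBoundedUnder.bddAbove_range ⟨(p : ℝ) ^ (-C),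
      Filter.eventually_map.2 (Filter.eventually_atTop.2 ⟨N, fun m hm => ?_⟩)⟩
    rw [hcoeff]
    by_cases hm0 : b m = 0
    · simp only [hm0, Rat.cast_zero, norm_zero]
      positivity
    · exact (Padic.norm_ratCast_le_zpow_neg_iff hm0 C).2 (hC m hm hm0)
  obtain ⟨m, hm0, hmneg⟩ := hbad
  have hint := Padic.norm_coeff_le_one_of_bddAbove (by omega) hG'n hG'bdd m
  rw [hcoeff, ← zpow_zero (p : ℝ), ← neg_zero, Padic.norm_ratCast_le_zpow_neg_iff hm0] at hint
  omega

/-- Let `f = 1 + ∑_{m≥1} a(m) wᵐ` have integer coefficients, let `n ≥ 1`, and let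
`g = ∑ b(m) wᵐ` be the formal `n`-th root of `f` (the unique power series with constant
term `1` and `gⁿ = f`, given by the binomial series). If `p` is a prime dividing `n` and
some coefficient `b(m)` is not `p`-integral, then `limsup_{m→∞} (−ord_p(b(m))) = ∞`:
the `p`-adic valuations of the `b(m)` are unbounded below. -/
theorem unbounded_denominators_of_nth_root (n : ℕ) (hn : 1 ≤ n) (p : ℕ) (hp : p.Prime)
    (hpn : p ∣ n) (a : ℕ → ℤ) (F G : PowerSeries ℚ)
    (hF : F = PowerSeries.mk fun m => if m = 0 then 1 else (a m : ℚ))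
    (hroot : G ^ n = F) (hG0 : PowerSeries.constantCoeff G = 1)
    (b : ℕ → ℚ) (hb : ∀ m, b m = PowerSeries.coeff m G)
    (hbad : ∃ m, b m ≠ 0 ∧ padicValRat p (b m) < 0) :
    ∀ C : ℤ, ∀ N : ℕ, ∃ m, N ≤ m ∧ b m ≠ 0 ∧ padicValRat p (b m) < C :=
  unbounded_denominators_of_nth_root_general n hn p hp a F G hF hroot b hb hbad
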